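/- (Strict matrix S-lemma.) Let M, N ∈ S^{q+r}. If there exists a real α ≥ 0 such that M − αN is positive definite, then Z_r(N) ⊆ Z_r⁺(M). Conversely, if in addition N ∈ Π_{q,r} and N₂₂ is negative definite, then Z_r(N) ⊆ Z_r⁺(M) if and only if there exists a real α ≥ 0 such that M − αN is positive definite. -/

import Mathlib

open Matrix
open scoped Classical

/-- The Moore–Penrose pseudoinverse of a real matrix, defined via its four
characterizing Penrose conditions (which determine it uniquely). -/
noncomputable def pinv {m n : ℕ} (A : Matrix (Fin m) (Fin n) ℝ) : Matrix (Fin n) (Fin m) ℝ :=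
  if h : ∃ B : Matrix (Fin n) (Fin m) ℝ,
      A * B * A = A ∧ B * A * B = B ∧ (A * B)ᵀ = A * B ∧ (B * A)ᵀ = B * A
  then h.choose else 0

/-- The unique positive semidefinite square root of a positive semidefinite matrix
(defined by its characterizing property, which determines it uniquely). -/
noncomputable def msqrt {n : ℕ} (A : Matrix (Fin n) (Fin n) ℝ) : Matrix (Fin n) (Fin n) ℝ :=
  if h : ∃ B : Matrix (Fin n) (Fin n) ℝ, B.PosSemidef ∧ B * B = A then h.choose else 0

/-- The quadratic matrix expression `[I; Z]ᵀ Π [I; Z]`. -/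
noncomputable def qmi {q r : ℕ} (P : Matrix (Fin q ⊕ Fin r) (Fin q ⊕ Fin r) ℝ)
    (Z : Matrix (Fin r) (Fin q) ℝ) : Matrix (Fin q) (Fin q) ℝ :=
  (fromRows (1 : Matrix (Fin q) (Fin q) ℝ) Z)ᵀ * P * fromRows 1 Z

/-- The solution set `Z_r(Π)` of the nonstrict QMI. -/
def ZrSet {q r : ℕ} (P : Matrix (Fin q ⊕ Fin r) (Fin q ⊕ Fin r) ℝ) :
    Set (Matrix (Fin r) (Fin q) ℝ) := {Z | (qmi P Z).PosSemidef}

/-- The solution set `Z_r⁺(Π)` of the strict QMI. -/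
def ZrPlusSet {q r : ℕ} (P : Matrix (Fin q ⊕ Fin r) (Fin q ⊕ Fin r) ℝ) :
    Set (Matrix (Fin r) (Fin q) ℝ) := {Z | (qmi P Z).PosDef}

/-- The solution set `Z_r⁰(Π)` of the quadratic matrix equality. -/
def ZrZeroSet {q r : ℕ} (P : Matrix (Fin q ⊕ Fin r) (Fin q ⊕ Fin r) ℝ) :
    Set (Matrix (Fin r) (Fin q) ℝ) := {Z | qmi P Z = 0}

/-- Generalized Schur complement `Π|Π₂₂ = Π₁₁ − Π₁₂ Π₂₂^† Π₂₁`. -/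
noncomputable def schurC {q r : ℕ} (P : Matrix (Fin q ⊕ Fin r) (Fin q ⊕ Fin r) ℝ) :
    Matrix (Fin q) (Fin q) ℝ :=
  P.toBlocks₁₁ - P.toBlocks₁₂ * pinv P.toBlocks₂₂ * P.toBlocks₂₁

/-- Membership in the class `Π_{q,r}`: symmetric, `Π₂₂ ⪯ 0`, `Π|Π₂₂ ⪰ 0`,
and `ker Π₂₂ ⊆ ker Π₁₂`. -/
def memPi {q r : ℕ} (P : Matrix (Fin q ⊕ Fin r) (Fin q ⊕ Fin r) ℝ) : Prop :=
  P.IsSymm ∧ (-P.toBlocks₂₂).PosSemidef ∧ (schurC P).PosSemidef ∧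
    ∀ x : Fin r → ℝ, P.toBlocks₂₂ *ᵥ x = 0 → P.toBlocks₁₂ *ᵥ x = 0

open Filter Topology

/-!
Sufficiency: `qmi M Z = [I; Z]ᵀ (M - α N) [I; Z] + α qmi N Z`, and `[I; Z]` is injective.

Necessity reduces to vectors. Completing the square with the Schur complement
`S = N₁₁ - N₁₂ N₂₂⁻¹ N₂₁ ⪰ 0`, every nonzero `v = (x, y)` with `vᵀ N v ≥ 0` has `x ≠ 0` (as
`N₂₂ ≺ 0`) and lies on the graph `y = Z x` of some `Z ∈ Z_r(N)`, a rank-one correction of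
`-N₂₂⁻¹ N₂₁`. Hence `vᵀ N v ≥ 0, v ≠ 0 ⇒ vᵀ M v > 0`, and it remains to prove the strict S-lemma
for two quadratic forms. If `N ⪯ 0`, compactness of the unit sphere gives `α`. Otherwise, after
replacing `M` by `M - ε I`, let `u` maximize `vᵀ N v / vᵀ M v` over unit vectors with
`vᵀ N v ≥ 0`, with value `β > 0`. The form `β M - N` is nonnegative on the open cone
`{vᵀ N v > 0}` and vanishes at `u ∈ {vᵀ N v > 0}`, so `u` is a local minimum of it; for a
quadratic form this forces `β M - N ⪰ 0`, by the parallelogram law.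
-/

section QuadraticForm
variable {n : Type*} [Fintype n]

lemma dotProduct_smul_mulVec_smul (A : Matrix n n ℝ) (c : ℝ) (v : n → ℝ) :
    c • v ⬝ᵥ A *ᵥ (c • v) = c ^ 2 * (v ⬝ᵥ A *ᵥ v) := by
  simp only [mulVec_smul, smul_dotProduct, dotProduct_smul, smul_eq_mul]
  ring

lemma dotProduct_sub_smul_mulVec (A B : Matrix n n ℝ) (α : ℝ) (v : n → ℝ) :
    v ⬝ᵥ (A - α • B) *ᵥ v = v ⬝ᵥ A *ᵥ v - α * (v ⬝ᵥ B *ᵥ v) := by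
  rw [sub_mulVec, dotProduct_sub, smul_mulVec, dotProduct_smul, smul_eq_mul]

lemma continuous_dotProduct_mulVec (A : Matrix n n ℝ) :
    Continuous fun v : n → ℝ => v ⬝ᵥ A *ᵥ v := by
  fun_prop

lemma isCompact_setOf_dotProduct_self_eq_one : IsCompact {v : n → ℝ | v ⬝ᵥ v = 1} := by
  refine (isCompact_closedBall (0 : n → ℝ) 1).of_isClosed_subset
    (isClosed_eq (by fun_prop) continuous_const) fun v hv => ?_
  rw [mem_closedBall_zero_iff, pi_norm_le_iff_of_nonneg zero_le_one]
  intro i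
  rw [Real.norm_eq_abs, abs_le_one_iff_mul_self_le_one, ← hv]
  exact Finset.single_le_sum (fun j _ => mul_self_nonneg (v j)) (Finset.mem_univ i)

lemma exists_smul_dotProduct_self_eq_one {v : n → ℝ} (hv : v ≠ 0) :
    ∃ c : ℝ, c ≠ 0 ∧ c • v ⬝ᵥ c • v = 1 := by
  have hpos : 0 < v ⬝ᵥ v := dotProduct_self_star_pos_iff.mpr hv
  refine ⟨(√(v ⬝ᵥ v))⁻¹, by positivity, ?_⟩
  rw [smul_dotProduct, dotProduct_smul, smul_eq_mul, smul_eq_mul, ← mul_assoc, ← sq, inv_pow,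
    Real.sq_sqrt hpos.le, inv_mul_cancel₀ hpos.ne']

lemma posDef_of_forall_dotProduct_self_eq_one {A : Matrix n n ℝ} (hA : A.IsHermitian)
    (h : ∀ v, v ⬝ᵥ v = 1 → 0 < v ⬝ᵥ A *ᵥ v) : A.PosDef := by
  refine .of_dotProduct_mulVec_pos hA fun v hv => ?_
  obtain ⟨c, hc, hcv⟩ := exists_smul_dotProduct_self_eq_one hv
  have := h _ hcv
  rw [dotProduct_smul_mulVec_smul] at this
  rw [star_trivial]
  exact pos_of_mul_pos_right this (sq_nonneg c)

lemma IsCompact.exists_forall_pos_of_monotone {X : Type*} [TopologicalSpace X] {K : Set X}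
    (hK : IsCompact K) {F : ℕ → X → ℝ} (hF : ∀ k, Continuous (F k))
    (hmono : ∀ x, Monotone fun k => F k x) (hcov : ∀ x ∈ K, ∃ k, 0 < F k x) :
    ∃ k, ∀ x ∈ K, 0 < F k x :=
  hK.elim_directed_cover (fun k => {x | 0 < F k x})
    (fun k => isOpen_lt continuous_const (hF k))
    (fun x hx => Set.mem_iUnion.mpr (hcov x hx))
    (Monotone.directed_le fun _ _ hkl _ hx => hx.trans_le (hmono _ hkl))

lemma dotProduct_mulVec_nonneg_of_isLocalMin {L : Matrix n n ℝ} {u : n → ℝ}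
    (hu : IsLocalMin (fun v => v ⬝ᵥ L *ᵥ v) u) (w : n → ℝ) : 0 ≤ w ⬝ᵥ L *ᵥ w := by
  have hline : ∀ c : ℝ, ∀ᶠ s in 𝓝 (0 : ℝ),
      u ⬝ᵥ L *ᵥ u ≤ (u + (c * s) • w) ⬝ᵥ L *ᵥ (u + (c * s) • w) :=
    fun c => ((Continuous.tendsto' (f := fun s : ℝ => u + (c * s) • w) (by fun_prop) 0 u
      (by simp))).eventually hu
  obtain ⟨s, ⟨hs₁, hs₂⟩, hs⟩ :=
    (((hline 1).and (hline (-1))).filter_mono nhdsWithin_le_nhds).and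
      (self_mem_nhdsWithin (s := {0}ᶜ)) |>.exists
  have parallelogram : (u + s • w) ⬝ᵥ L *ᵥ (u + s • w) + (u - s • w) ⬝ᵥ L *ᵥ (u - s • w) =
      2 * (u ⬝ᵥ L *ᵥ u) + 2 * s ^ 2 * (w ⬝ᵥ L *ᵥ w) := by
    simp only [mulVec_add, mulVec_sub, mulVec_smul, dotProduct_add, dotProduct_sub, add_dotProduct,
      sub_dotProduct, smul_dotProduct, dotProduct_smul, smul_eq_mul]
    ring
  simp only [one_mul, neg_one_mul, neg_smul, ← sub_eq_add_neg] at hs₁ hs₂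
  have : 0 < s ^ 2 := pow_two_pos_of_ne_zero hs
  nlinarith

lemma exists_posDef_sub_smul_of_nonpos {A B : Matrix n n ℝ} (hA : A.IsHermitian)
    (hB : B.IsHermitian) (hB₀ : ∀ v, v ⬝ᵥ B *ᵥ v ≤ 0)
    (h : ∀ v ≠ 0, 0 ≤ v ⬝ᵥ B *ᵥ v → 0 < v ⬝ᵥ A *ᵥ v) :
    ∃ α : ℝ, 0 ≤ α ∧ (A - α • B).PosDef := by
  have hcov : ∀ v : n → ℝ, v ⬝ᵥ v = 1 → ∃ k : ℕ, 0 < v ⬝ᵥ A *ᵥ v - k * (v ⬝ᵥ B *ᵥ v) := by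
    intro v hv
    have hv₀ : v ≠ 0 := by rintro rfl; simp at hv
    rcases (hB₀ v).lt_or_eq with hneg | hzero
    · obtain ⟨k, hk⟩ := exists_nat_gt ((v ⬝ᵥ A *ᵥ v) / (v ⬝ᵥ B *ᵥ v))
      rw [div_lt_iff_of_neg hneg] at hk
      exact ⟨k, by linarith⟩
    · exact ⟨0, by simpa using h v hv₀ hzero.ge⟩
  obtain ⟨k, hk⟩ := isCompact_setOf_dotProduct_self_eq_one.exists_forall_pos_of_monotone
    (F := fun (k : ℕ) v => v ⬝ᵥ A *ᵥ v - k * (v ⬝ᵥ B *ᵥ v)) (fun k => by fun_prop) (fun v _ _ hkl =>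
      sub_le_sub_left (mul_le_mul_of_nonpos_right (Nat.cast_le.mpr hkl) (hB₀ v)) _) hcov
  refine ⟨k, k.cast_nonneg, posDef_of_forall_dotProduct_self_eq_one
    (hA.sub (hB.smul (IsSelfAdjoint.all _))) fun v hv => ?_⟩
  rw [dotProduct_sub_smul_mulVec]
  exact hk v hv

lemma exists_max_ratio_of_exists_pos {A B : Matrix n n ℝ}
    (h : ∀ v ≠ 0, 0 ≤ v ⬝ᵥ B *ᵥ v → 0 < v ⬝ᵥ A *ᵥ v) (hB : ∃ v, 0 < v ⬝ᵥ B *ᵥ v) :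
    ∃ β : ℝ, 0 < β ∧ (∀ v, 0 ≤ v ⬝ᵥ B *ᵥ v → v ⬝ᵥ B *ᵥ v ≤ β * (v ⬝ᵥ A *ᵥ v)) ∧
      ∃ u, 0 < u ⬝ᵥ B *ᵥ u ∧ u ⬝ᵥ B *ᵥ u = β * (u ⬝ᵥ A *ᵥ u) := by
  set K := {v : n → ℝ | v ⬝ᵥ v = 1} ∩ {v | 0 ≤ v ⬝ᵥ B *ᵥ v}
  have hK : IsCompact K := isCompact_setOf_dotProduct_self_eq_one.inter_right
    (isClosed_le continuous_const (continuous_dotProduct_mulVec B))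
  have hA : ∀ v ∈ K, 0 < v ⬝ᵥ A *ᵥ v := fun v hv =>
    h v (by rintro rfl; simp [K] at hv) hv.2
  obtain ⟨v₀, hv₀⟩ := hB
  obtain ⟨c, hc, hcv₀⟩ := exists_smul_dotProduct_self_eq_one (v := v₀) (by rintro rfl; simp at hv₀)
  have hcv₀B : 0 < c • v₀ ⬝ᵥ B *ᵥ (c • v₀) := by
    rw [dotProduct_smul_mulVec_smul]; exact mul_pos (pow_two_pos_of_ne_zero hc) hv₀
  obtain ⟨u, huK, hu⟩ := hK.exists_isMaxOn ⟨c • v₀, hcv₀, hcv₀B.le⟩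
    ((continuous_dotProduct_mulVec B).continuousOn.div
      (continuous_dotProduct_mulVec A).continuousOn fun v hv => (hA v hv).ne')
  set β := (u ⬝ᵥ B *ᵥ u) / (u ⬝ᵥ A *ᵥ u)
  have hβ : 0 < β := (div_pos hcv₀B (hA _ ⟨hcv₀, hcv₀B.le⟩)).trans_le (hu ⟨hcv₀, hcv₀B.le⟩)
  have hBu : u ⬝ᵥ B *ᵥ u = β * (u ⬝ᵥ A *ᵥ u) := (div_mul_cancel₀ _ (hA u huK).ne').symm
  refine ⟨β, hβ, fun v hv => ?_, u, hBu ▸ mul_pos hβ (hA u huK), hBu⟩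
  rcases eq_or_ne v 0 with rfl | hv₀
  · simp
  obtain ⟨c, hc, hcv⟩ := exists_smul_dotProduct_self_eq_one hv₀
  have hcvK : c • v ∈ K := ⟨hcv, show 0 ≤ c • v ⬝ᵥ B *ᵥ (c • v) by
    rw [dotProduct_smul_mulVec_smul]; positivity⟩
  have : c • v ⬝ᵥ B *ᵥ (c • v) / c • v ⬝ᵥ A *ᵥ (c • v) ≤ β := hu hcvK
  rwa [dotProduct_smul_mulVec_smul, dotProduct_smul_mulVec_smul,
    mul_div_mul_left _ _ (pow_ne_zero 2 hc), div_le_iff₀ (h v hv₀ hv)] at this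

lemma exists_smul_le_of_exists_pos {A B : Matrix n n ℝ}
    (h : ∀ v ≠ 0, 0 ≤ v ⬝ᵥ B *ᵥ v → 0 < v ⬝ᵥ A *ᵥ v) (hB : ∃ v, 0 < v ⬝ᵥ B *ᵥ v) :
    ∃ α : ℝ, 0 ≤ α ∧ ∀ v, α * (v ⬝ᵥ B *ᵥ v) ≤ v ⬝ᵥ A *ᵥ v := by
  obtain ⟨β, hβ, hle, u, hBu, hu⟩ := exists_max_ratio_of_exists_pos h hB
  have hmin : IsLocalMin (fun v => v ⬝ᵥ (β • A - B) *ᵥ v) u := by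
    filter_upwards [(isOpen_lt continuous_const (continuous_dotProduct_mulVec B)).mem_nhds hBu]
      with v hv
    simp only [sub_mulVec, smul_mulVec, dotProduct_sub, dotProduct_smul, smul_eq_mul]
    linarith [hle v hv.le]
  refine ⟨β⁻¹, inv_nonneg.mpr hβ.le, fun v => ?_⟩
  have := dotProduct_mulVec_nonneg_of_isLocalMin hmin v
  simp only [sub_mulVec, smul_mulVec, dotProduct_sub, dotProduct_smul, smul_eq_mul] at this
  rw [inv_mul_le_iff₀ hβ]
  linarith

variable [DecidableEq n]

lemma exists_posDef_sub_smul_of_exists_pos {A B : Matrix n n ℝ} (hA : A.IsHermitian)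
    (hB : B.IsHermitian) (h : ∀ v ≠ 0, 0 ≤ v ⬝ᵥ B *ᵥ v → 0 < v ⬝ᵥ A *ᵥ v)
    (hB₀ : ∃ v, 0 < v ⬝ᵥ B *ᵥ v) :
    ∃ α : ℝ, 0 ≤ α ∧ (A - α • B).PosDef := by
  obtain ⟨k, hk⟩ := (isCompact_setOf_dotProduct_self_eq_one.inter_right
    (isClosed_le continuous_const (continuous_dotProduct_mulVec B))).exists_forall_pos_of_monotone
    (F := fun (k : ℕ) v => v ⬝ᵥ A *ᵥ v - ((k : ℝ) + 1)⁻¹) (fun k => by fun_prop)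
    (fun v _ _ hkl => sub_le_sub_left (by gcongr) _) fun v hv => by
      obtain ⟨k, hk⟩ := exists_nat_one_div_lt (h v (by rintro rfl; simp at hv) hv.2)
      exact ⟨k, by simpa using hk⟩
  set ε : ℝ := ((k : ℝ) + 1)⁻¹
  have hA' : ∀ v ≠ 0, 0 ≤ v ⬝ᵥ B *ᵥ v → 0 < v ⬝ᵥ (A - ε • 1) *ᵥ v := by
    intro v hv₀ hv
    obtain ⟨c, hc, hcv⟩ := exists_smul_dotProduct_self_eq_one hv₀
    have := hk (c • v) ⟨hcv, show 0 ≤ c • v ⬝ᵥ B *ᵥ (c • v) by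
      rw [dotProduct_smul_mulVec_smul]; positivity⟩
    have hε : c • v ⬝ᵥ (A - ε • 1) *ᵥ (c • v) = c • v ⬝ᵥ A *ᵥ (c • v) - ε := by
      rw [dotProduct_sub_smul_mulVec, one_mulVec, hcv, mul_one]
    rw [← hε, dotProduct_smul_mulVec_smul] at this
    exact pos_of_mul_pos_right this (sq_nonneg c)
  obtain ⟨α, hα, hle⟩ := exists_smul_le_of_exists_pos hA' hB₀
  refine ⟨α, hα, posDef_of_forall_dotProduct_self_eq_one
    (hA.sub (hB.smul (IsSelfAdjoint.all _))) fun v hv => ?_⟩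
  have := hle v
  rw [dotProduct_sub_smul_mulVec, one_mulVec, hv] at this
  rw [dotProduct_sub_smul_mulVec]
  have : 0 < ε := by positivity
  linarith

theorem exists_posDef_sub_smul {A B : Matrix n n ℝ} (hA : A.IsHermitian) (hB : B.IsHermitian)
    (h : ∀ v ≠ 0, 0 ≤ v ⬝ᵥ B *ᵥ v → 0 < v ⬝ᵥ A *ᵥ v) :
    ∃ α : ℝ, 0 ≤ α ∧ (A - α • B).PosDef := by
  by_cases hB₀ : ∃ v, 0 < v ⬝ᵥ B *ᵥ v
  · exact exists_posDef_sub_smul_of_exists_pos hA hB h hB₀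
  · push Not at hB₀
    exact exists_posDef_sub_smul_of_nonpos hA hB hB₀ h
end QuadraticForm

lemma smul_vecMulVec_mulVec {m n : Type*} [Fintype m] (c : ℝ) (w : n → ℝ) (p u : m → ℝ) :
    (c • vecMulVec w p) *ᵥ u = (c * (p ⬝ᵥ u)) • w := by
  rw [smul_mulVec, vecMulVec_mulVec, op_smul_eq_smul, smul_smul]

section SchurComplement
variable {m n : Type*} [Fintype m] [Fintype n]

lemma Matrix.IsHermitian.dotProduct_mulVec_comm {S : Matrix m m ℝ} (hS : S.IsHermitian)
    (x y : m → ℝ) :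
    x ⬝ᵥ S *ᵥ y = y ⬝ᵥ S *ᵥ x := by
  rw [dotProduct_mulVec, ← mulVec_transpose, ← conjTranspose_eq_transpose_of_trivial, hS.eq,
    dotProduct_comm]

lemma exists_mulVec_eq_forall_nonneg {S : Matrix m m ℝ} (hS : S.PosSemidef) (D : Matrix n n ℝ)
    {x : m → ℝ} (hx : x ≠ 0) (w : n → ℝ) (h : 0 ≤ x ⬝ᵥ S *ᵥ x + w ⬝ᵥ D *ᵥ w) :
    ∃ Y : Matrix n m ℝ, Y *ᵥ x = w ∧ ∀ u, 0 ≤ u ⬝ᵥ S *ᵥ u + Y *ᵥ u ⬝ᵥ D *ᵥ (Y *ᵥ u) := by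
  set c := x ⬝ᵥ S *ᵥ x
  -- `Y = w pᵀ / (p ⬝ x)` works once `(p ⬝ u / p ⬝ x)² c ≤ uᵀ S u`: take `p = S x`
  -- (Cauchy–Schwarz for `S`), or `p = x` when `c = 0`.
  obtain ⟨p, hp, hpS⟩ : ∃ p : m → ℝ, p ⬝ᵥ x ≠ 0 ∧
      ∀ u, ((p ⬝ᵥ u) / (p ⬝ᵥ x)) ^ 2 * c ≤ u ⬝ᵥ S *ᵥ u := by
    rcases (hS.dotProduct_mulVec_nonneg x).eq_or_lt with hc | hc
    · refine ⟨x, (dotProduct_self_star_pos_iff.mpr hx).ne', fun u => ?_⟩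
      rw [star_trivial] at hc
      rw [show c = 0 from hc.symm, mul_zero]
      simpa using hS.dotProduct_mulVec_nonneg u
    · rw [star_trivial] at hc
      refine ⟨S *ᵥ x, by rw [dotProduct_comm]; exact hc.ne', fun u => ?_⟩
      rw [dotProduct_comm (S *ᵥ x) x]
      set t := (S *ᵥ x ⬝ᵥ u) / c
      have ht : t * c = x ⬝ᵥ S *ᵥ u := by
        rw [div_mul_cancel₀ _ hc.ne', dotProduct_comm, hS.isHermitian.dotProduct_mulVec_comm]
      have := hS.dotProduct_mulVec_nonneg (u - t • x)
      simp only [star_trivial, mulVec_sub, mulVec_smul, dotProduct_sub, sub_dotProduct,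
        dotProduct_smul, smul_dotProduct, smul_eq_mul,
        hS.isHermitian.dotProduct_mulVec_comm u x] at this
      rw [show x ⬝ᵥ S *ᵥ x = c from rfl, ← ht] at this
      nlinarith
  refine ⟨(p ⬝ᵥ x)⁻¹ • vecMulVec w p, ?_, fun u => ?_⟩
  · rw [smul_vecMulVec_mulVec, inv_mul_cancel₀ hp, one_smul]
  · rw [smul_vecMulVec_mulVec, smul_dotProduct, mulVec_smul, dotProduct_smul, smul_eq_mul,
      smul_eq_mul, ← mul_assoc, inv_mul_eq_div]
    have := hpS u
    nlinarith [sq_nonneg ((p ⬝ᵥ u) / (p ⬝ᵥ x))]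

variable [DecidableEq n]

lemma sumElim_dotProduct_fromBlocks_mulVec (A : Matrix m m ℝ) (B : Matrix m n ℝ)
    {D : Matrix n n ℝ} [Invertible D] (hD : D.IsHermitian) (x : m → ℝ) (y : n → ℝ) :
    (x ⊕ᵥ y) ⬝ᵥ fromBlocks A B Bᴴ D *ᵥ (x ⊕ᵥ y) =
      x ⬝ᵥ (A - B * D⁻¹ * Bᴴ) *ᵥ x + ((D⁻¹ * Bᴴ) *ᵥ x + y) ⬝ᵥ D *ᵥ ((D⁻¹ * Bᴴ) *ᵥ x + y) := by
  have := schur_complement_eq₂₂ A B x y hD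
  simp only [star_trivial, ← dotProduct_mulVec] at this
  rw [this, add_comm]

lemma exists_eq_sumElim_mulVec_of_nonneg (A : Matrix m m ℝ) (B : Matrix m n ℝ)
    {D : Matrix n n ℝ} (hD : (-D).PosDef) (hS : (A - B * D⁻¹ * Bᴴ).PosSemidef)
    {v : m ⊕ n → ℝ} (hv : v ≠ 0) (h : 0 ≤ v ⬝ᵥ fromBlocks A B Bᴴ D *ᵥ v) :
    ∃ x ≠ 0, ∃ Z : Matrix n m ℝ, v = x ⊕ᵥ Z *ᵥ x ∧
      ∀ u, 0 ≤ (u ⊕ᵥ Z *ᵥ u) ⬝ᵥ fromBlocks A B Bᴴ D *ᵥ (u ⊕ᵥ Z *ᵥ u) := by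
  have hDh : D.IsHermitian := by simpa using hD.isHermitian.neg
  let : Invertible D := (by simpa using hD.isUnit.neg : IsUnit D).invertible
  have hq := sumElim_dotProduct_fromBlocks_mulVec A B hDh
  rw [← Sum.elim_comp_inl_inr v, hq] at h
  set x := v ∘ Sum.inl
  set y := v ∘ Sum.inr
  have hx : x ≠ 0 := by
    rintro hx
    have hy : y ≠ 0 := fun hy => hv (by rw [← Sum.elim_comp_inl_inr v]; simp [x, y, hx, hy])
    have := hD.dotProduct_mulVec_pos hy
    simp only [hx, mulVec_zero, dotProduct_zero, zero_add, star_trivial, neg_mulVec,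
      dotProduct_neg] at h this
    linarith
  obtain ⟨Y, hYx, hY⟩ := exists_mulVec_eq_forall_nonneg hS D hx _ h
  refine ⟨x, hx, Y - D⁻¹ * Bᴴ, ?_, fun u => ?_⟩
  · rw [sub_mulVec, hYx, add_sub_cancel_left, Sum.elim_comp_inl_inr]
  · rw [hq, sub_mulVec Y, add_sub_cancel]
    exact hY u
end SchurComplement

section QMI
variable {q r : ℕ}

lemma pinv_eq_inv {k : ℕ} (A : Matrix (Fin k) (Fin k) ℝ) [Invertible A] : pinv A = A⁻¹ := by
  have hA : ∃ B : Matrix (Fin k) (Fin k) ℝ,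
      A * B * A = A ∧ B * A * B = B ∧ (A * B)ᵀ = A * B ∧ (B * A)ᵀ = B * A :=
    ⟨A⁻¹, by simp⟩
  rw [pinv, dif_pos hA]
  calc hA.choose = A⁻¹ * (A * hA.choose * A) * A⁻¹ := by simp [Matrix.mul_assoc]
    _ = A⁻¹ := by rw [hA.choose_spec.1]; simp

-- The body of `qmi` elaborates its outer product with `CStarMatrix`'s multiplication instance,
-- which `Matrix` lemmas do not match; this restates it with `Matrix`'s.
lemma qmi_eq_mul (P : Matrix (Fin q ⊕ Fin r) (Fin q ⊕ Fin r) ℝ) (Z : Matrix (Fin r) (Fin q) ℝ) :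
    qmi P Z = (fromRows (1 : Matrix (Fin q) (Fin q) ℝ) Z)ᵀ * P *
      fromRows (1 : Matrix (Fin q) (Fin q) ℝ) Z :=
  rfl

lemma dotProduct_qmi_mulVec (P : Matrix (Fin q ⊕ Fin r) (Fin q ⊕ Fin r) ℝ)
    (Z : Matrix (Fin r) (Fin q) ℝ) (x : Fin q → ℝ) :
    x ⬝ᵥ qmi P Z *ᵥ x = (x ⊕ᵥ Z *ᵥ x) ⬝ᵥ P *ᵥ (x ⊕ᵥ Z *ᵥ x) := by
  rw [qmi_eq_mul, ← mulVec_mulVec, ← mulVec_mulVec, dotProduct_mulVec, vecMul_transpose,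
    fromRows_mulVec, one_mulVec]

lemma isHermitian_qmi {P : Matrix (Fin q ⊕ Fin r) (Fin q ⊕ Fin r) ℝ} (hP : P.IsHermitian)
    (Z : Matrix (Fin r) (Fin q) ℝ) : (qmi P Z).IsHermitian := by
  simpa [qmi_eq_mul, conjTranspose_eq_transpose_of_trivial] using
    isHermitian_conjTranspose_mul_mul (fromRows 1 Z) hP

lemma posDef_qmi_of_posDef_sub_smul {M N : Matrix (Fin q ⊕ Fin r) (Fin q ⊕ Fin r) ℝ} {α : ℝ}
    (hα : 0 ≤ α) (hMN : (M - α • N).PosDef) {Z : Matrix (Fin r) (Fin q) ℝ}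
    (hZ : (qmi N Z).PosSemidef) : (qmi M Z).PosDef := by
  have hsplit : qmi M Z = qmi (M - α • N) Z + α • qmi N Z := by
    simp [qmi_eq_mul, Matrix.mul_sub, Matrix.sub_mul]
  have hinj : Function.Injective (fromRows (1 : Matrix (Fin q) (Fin q) ℝ) Z).mulVec :=
    fun x y hxy => by simpa [fromRows_mulVec] using congrArg (· ∘ Sum.inl) hxy
  rw [hsplit]
  have hPD : (qmi (M - α • N) Z).PosDef := by
    simpa [qmi_eq_mul, conjTranspose_eq_transpose_of_trivial] using
      hMN.conjTranspose_mul_mul_same hinj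
  exact hPD.add_posSemidef (hZ.smul hα)

lemma forall_pos_of_ZrSet_subset {M N : Matrix (Fin q ⊕ Fin r) (Fin q ⊕ Fin r) ℝ}
    (hN : memPi N) (hN₂₂ : (-N.toBlocks₂₂).PosDef) (hsub : ZrSet N ⊆ ZrPlusSet M) :
    ∀ v ≠ 0, 0 ≤ v ⬝ᵥ N *ᵥ v → 0 < v ⬝ᵥ M *ᵥ v := by
  obtain ⟨hNs, -, hS, -⟩ := hN
  have hNh : N.IsHermitian := isHermitian_iff_isSymm.mpr hNs
  have h₂₁ : N.toBlocks₁₂ᴴ = N.toBlocks₂₁ :=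
    (isHermitian_fromBlocks_iff.mp ((fromBlocks_toBlocks N).symm ▸ hNh)).2.1
  have hblocks : N = fromBlocks N.toBlocks₁₁ N.toBlocks₁₂ N.toBlocks₁₂ᴴ N.toBlocks₂₂ := by
    rw [h₂₁, fromBlocks_toBlocks]
  let : Invertible N.toBlocks₂₂ := (by simpa using hN₂₂.isUnit.neg : IsUnit _).invertible
  rw [schurC, pinv_eq_inv, ← h₂₁] at hS
  intro v hv hvN
  rw [hblocks] at hvN
  obtain ⟨x, hx, Z, rfl, hZ⟩ := exists_eq_sumElim_mulVec_of_nonneg _ _ hN₂₂ hS hv hvN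
  have hZN : Z ∈ ZrSet N := .of_dotProduct_mulVec_nonneg (isHermitian_qmi hNh Z) fun u => by
    rw [star_trivial, dotProduct_qmi_mulVec, hblocks]
    exact hZ u
  simpa [dotProduct_qmi_mulVec] using (hsub hZN).dotProduct_mulVec_pos hx

end QMI

theorem stmt_15_general {q r : ℕ} (M N : Matrix (Fin q ⊕ Fin r) (Fin q ⊕ Fin r) ℝ)
    (hM : M.IsSymm) :
    ((∃ α : ℝ, 0 ≤ α ∧ (M - α • N).PosDef) → ZrSet N ⊆ ZrPlusSet M) ∧
    ((memPi N ∧ (-N.toBlocks₂₂).PosDef) →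
      (ZrSet N ⊆ ZrPlusSet M ↔ ∃ α : ℝ, 0 ≤ α ∧ (M - α • N).PosDef)) := by
  have sufficient : (∃ α : ℝ, 0 ≤ α ∧ (M - α • N).PosDef) → ZrSet N ⊆ ZrPlusSet M :=
    fun ⟨α, hα, hMN⟩ _ hZ => posDef_qmi_of_posDef_sub_smul hα hMN hZ
  refine ⟨sufficient, fun ⟨hN, hN₂₂⟩ => ⟨fun hsub => ?_, sufficient⟩⟩
  exact exists_posDef_sub_smul (isHermitian_iff_isSymm.mpr hM)
    (isHermitian_iff_isSymm.mpr hN.1) (forall_pos_of_ZrSet_subset hN hN₂₂ hsub)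

/-- Strict matrix S-lemma: If `M − αN ≻ 0` for some `α ≥ 0`, then
`Z_r(N) ⊆ Z_r⁺(M)`. Conversely, if moreover `N ∈ Π_{q,r}` and `N₂₂ ≺ 0`, then
`Z_r(N) ⊆ Z_r⁺(M)` iff such an `α ≥ 0` exists. -/
theorem stmt_15 {q r : ℕ} (M N : Matrix (Fin q ⊕ Fin r) (Fin q ⊕ Fin r) ℝ)
    (hM : M.IsSymm) (hN : N.IsSymm) :
    ((∃ α : ℝ, 0 ≤ α ∧ (M - α • N).PosDef) → ZrSet N ⊆ ZrPlusSet M) ∧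
    ((memPi N ∧ (-N.toBlocks₂₂).PosDef) →
      (ZrSet N ⊆ ZrPlusSet M ↔ ∃ α : ℝ, 0 ≤ α ∧ (M - α • N).PosDef)) :=
  stmt_15_general M N hM
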